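/- Let f be absolutely continuous on (a,b), a < b real, 0 < α < 1. Then the Caputo–Fabrizio operator admits the expansion ^{CF}D^α_{a+} f(t) = −(M(α) f(a⁺)/(1−α)) exp(−α(t−a)/(1−α)) + (M(α)/(1−α)) Σ_{k=0}^∞ (−α/(1−α))^k J^k_{a+} f(t), where J^k_{a+} is the k-fold repeated integral (Riemann–Liouville integral of integer order k, with J^0 the identity). In particular, the CF operator is an infinite linear combination of integer-order repeated integrals of f plus an exponential boundary term. -/

import Mathlib

/-! Write `λ = -α / (1 - α)`. Expanding `exp (λ (t - τ))` in its power series and exchanging sum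
and integral (dominated by `exp (|λ| |t - a|) |f|`) gives
`∑ λ^k J^k f(t) = f(t) + λ ∫_a^t exp (λ (t - τ)) f(τ) dτ`.
Integrating by parts the absolutely continuous representative `fA + ∫_a^τ f'` of `f` against the
same exponential kernel gives
`∫_a^t exp (λ (t - τ)) f'(τ) dτ = f(t) - fA exp (λ (t - a)) + λ ∫_a^t exp (λ (t - τ)) f(τ) dτ`,
and the expansion is the difference of the two identities. -/

open MeasureTheory

/-- Riemann–Liouville fractional integral, with the convention `J^0_{a+} f = f`. -/
noncomputable def RLr (a σ : ℝ) (f : ℝ → ℝ) (t : ℝ) : ℝ :=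
  if σ = 0 then f t
  else (Real.Gamma σ)⁻¹ * ∫ τ in a..t, (t - τ) ^ (σ - 1) * f τ

/-- Caputo–Fabrizio operator. -/
noncomputable def CFop (M α a : ℝ) (f' : ℝ → ℝ) (t : ℝ) : ℝ :=
  (M / (1 - α)) * ∫ τ in a..t, Real.exp (-(α / (1 - α)) * (t - τ)) * f' τ

open Set Real
open scoped Nat

theorem RLr_natCast_add_one (a : ℝ) (f : ℝ → ℝ) (t : ℝ) (k : ℕ) :
    RLr a ((k + 1 : ℕ) : ℝ) f t = (k ! : ℝ)⁻¹ * ∫ τ in a..t, (t - τ) ^ k * f τ := by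
  rw [RLr, if_neg (by positivity), Nat.cast_succ, Real.Gamma_nat_eq_factorial, add_sub_cancel_right]
  simp only [Real.rpow_natCast]

theorem hasSum_integral_pow_div_factorial_mul {f : ℝ → ℝ} {a t : ℝ}
    (hf : IntervalIntegrable f volume a t) (x : ℝ) :
    HasSum (fun k : ℕ => ∫ τ in a..t, (x * (t - τ)) ^ k / k ! * f τ)
      (∫ τ in a..t, exp (x * (t - τ)) * f τ) := by
  refine intervalIntegral.hasSum_integral_of_dominated_convergence
    (fun k τ => (|x| * |t - a|) ^ k / k ! * |f τ|) (fun k => ?_) (fun k => ?_) ?_ ?_ ?_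
  · exact (Continuous.aestronglyMeasurable (by fun_prop)).mul hf.def'.aestronglyMeasurable
  · refine Filter.Eventually.of_forall fun τ hτ => ?_
    have hτt : |t - τ| ≤ |t - a| := abs_sub_right_of_mem_uIcc (uIoc_subset_uIcc hτ)
    simp only [norm_mul, norm_div, norm_pow, Real.norm_eq_abs, Nat.abs_cast]
    gcongr
  · exact Filter.Eventually.of_forall fun τ _ =>
      (Real.summable_pow_div_factorial _).mul_right _
  · simp_rw [tsum_mul_right]
    exact hf.abs.const_mul _
  · refine Filter.Eventually.of_forall fun τ _ => ?_
    have hexp := NormedSpace.expSeries_div_hasSum_exp (x * (t - τ))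
    rw [← Real.exp_eq_exp_ℝ] at hexp
    exact hexp.mul_right _

theorem hasSum_pow_mul_RLr {f : ℝ → ℝ} {a t : ℝ} (hf : IntervalIntegrable f volume a t)
    (lam : ℝ) :
    HasSum (fun k : ℕ => lam ^ k * RLr a k f t)
      (f t + lam * ∫ τ in a..t, exp (lam * (t - τ)) * f τ) := by
  rw [← hasSum_nat_add_iff' 1, Finset.sum_range_one, pow_zero, one_mul, Nat.cast_zero,
    RLr, if_pos rfl, add_sub_cancel_left]
  refine ((hasSum_integral_pow_div_factorial_mul hf lam).mul_left lam).congr_fun fun k => ?_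
  rw [RLr_natCast_add_one, ← intervalIntegral.integral_const_mul,
    ← intervalIntegral.integral_const_mul, ← intervalIntegral.integral_const_mul]
  congr 1
  funext τ
  rw [mul_pow]
  ring

theorem AbsolutelyContinuousOnInterval.integral_exp_mul_deriv {H : ℝ → ℝ} {a t : ℝ}
    (hH : AbsolutelyContinuousOnInterval H a t) (lam : ℝ) :
    ∫ τ in a..t, exp (lam * (t - τ)) * deriv H τ =
      H t - exp (lam * (t - a)) * H a + lam * ∫ τ in a..t, exp (lam * (t - τ)) * H τ := by
  have hE : ContDiff ℝ 1 fun τ => exp (lam * (t - τ)) := by fun_prop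
  have hE' : deriv (fun τ => exp (lam * (t - τ))) = fun τ => -lam * exp (lam * (t - τ)) := by
    funext τ
    have := ((hasDerivAt_id τ).const_sub t).const_mul lam |>.exp
    simpa [mul_comm] using this.deriv
  rw [hE.contDiffOn.absolutelyContinuousOnInterval.integral_mul_deriv_eq_deriv_mul hH, hE']
  simp_rw [neg_mul, mul_assoc, intervalIntegral.integral_neg, intervalIntegral.integral_const_mul]
  simp

section PrimitiveRepresentative

variable {f f' : ℝ → ℝ} {a t fA : ℝ}

theorem intervalIntegrable_of_eq_add_integral (hat : a ≤ t)
    (hf' : IntervalIntegrable f' volume a t)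
    (hf : ∀ τ ∈ Ioc a t, f τ = fA + ∫ s in a..τ, f' s) :
    IntervalIntegrable f volume a t := by
  have hH := (hf'.absolutelyContinuousOnInterval_intervalIntegral left_mem_uIcc).continuousOn
  refine ((continuousOn_const (c := fA)).add hH).intervalIntegrable.congr_ae ?_
  rw [uIoc_of_le hat]
  exact ae_restrict_of_forall_mem measurableSet_Ioc fun τ hτ => (hf τ hτ).symm

theorem integral_exp_mul_eq_of_eq_add_integral (hat : a < t)
    (hf' : IntervalIntegrable f' volume a t)
    (hf : ∀ τ ∈ Ioc a t, f τ = fA + ∫ s in a..τ, f' s) (lam : ℝ) :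
    ∫ τ in a..t, exp (lam * (t - τ)) * f' τ =
      f t - fA * exp (lam * (t - a)) + lam * ∫ τ in a..t, exp (lam * (t - τ)) * f τ := by
  set H : ℝ → ℝ := fun τ => fA + ∫ s in a..τ, f' s
  have hH : AbsolutelyContinuousOnInterval H a t :=
    contDiffOn_const.absolutelyContinuousOnInterval.add
      (hf'.absolutelyContinuousOnInterval_intervalIntegral left_mem_uIcc)
  have hderiv : ∀ᵐ τ, τ ∈ uIoc a t →
      exp (lam * (t - τ)) * f' τ = exp (lam * (t - τ)) * deriv H τ := by
    filter_upwards [hf'.ae_hasDerivAt_integral] with τ hτ hτ'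
    rw [((hτ (uIoc_subset_uIcc hτ') a left_mem_uIcc).const_add fA).deriv]
  have hfH : ∀ᵐ τ, τ ∈ uIoc a t → exp (lam * (t - τ)) * H τ = exp (lam * (t - τ)) * f τ := by
    refine Filter.Eventually.of_forall fun τ hτ => ?_
    rw [uIoc_of_le hat.le] at hτ
    rw [hf τ hτ]
  rw [intervalIntegral.integral_congr_ae hderiv, hH.integral_exp_mul_deriv,
    intervalIntegral.integral_congr_ae hfH, hf t ⟨hat, le_rfl⟩]
  simp only [H, intervalIntegral.integral_same, add_zero]
  ring

end PrimitiveRepresentative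

theorem CF_eq_tsum_integer_integrals_general (a b α M fA : ℝ) (f f' : ℝ → ℝ)
    (hf' : IntervalIntegrable f' volume a b)
    (hf : ∀ t ∈ Set.Ioo a b, f t = fA + ∫ τ in a..t, f' τ) :
    ∀ t ∈ Set.Ioo a b,
      CFop M α a f' t =
        -(M * fA / (1 - α)) * Real.exp (-(α / (1 - α)) * (t - a)) +
          (M / (1 - α)) * ∑' k : ℕ, (-(α / (1 - α))) ^ k * RLr a (k : ℝ) f t := by
  rintro t ⟨hat, htb⟩
  have hf't : IntervalIntegrable f' volume a t :=
    hf'.mono_set (uIcc_subset_uIcc_left (mem_uIcc_of_le hat.le htb.le))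
  have hft : ∀ τ ∈ Ioc a t, f τ = fA + ∫ s in a..τ, f' s :=
    fun τ hτ => hf τ ⟨hτ.1, hτ.2.trans_lt htb⟩
  rw [CFop, (hasSum_pow_mul_RLr (intervalIntegrable_of_eq_add_integral hat.le hf't hft) _).tsum_eq,
    integral_exp_mul_eq_of_eq_add_integral hat hf't hft]
  ring

/-- Expansion of the CF operator as an exponential boundary term plus an infinite
linear combination of integer-order repeated integrals:
`^{CF}D^α_{a+} f(t) = −(M(α)f(a⁺)/(1−α)) e^{−α(t−a)/(1−α)}
  + (M(α)/(1−α)) Σ_k (−α/(1−α))^k J^k_{a+} f(t)`. -/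
theorem CF_eq_tsum_integer_integrals (a b α M fA : ℝ) (f f' : ℝ → ℝ)
    (hab : a < b) (hα : 0 < α) (hα1 : α < 1)
    (hf' : IntervalIntegrable f' volume a b)
    (hf : ∀ t ∈ Set.Ioo a b, f t = fA + ∫ τ in a..t, f' τ) :
    ∀ t ∈ Set.Ioo a b,
      CFop M α a f' t =
        -(M * fA / (1 - α)) * Real.exp (-(α / (1 - α)) * (t - a)) +
          (M / (1 - α)) * ∑' k : ℕ, (-(α / (1 - α))) ^ k * RLr a (k : ℝ) f t :=
  CF_eq_tsum_integer_integrals_general a b α M fA f f' hf' hf
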